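/- arXiv:1902.00836 — 7 statements merged into one kernel-verified Lean document; each statement's English description precedes it below -/
import Mathlib

section
/- Let λ_u > 0, H > 0, η_L > 0, η_N > 0 and R_e ≥ 0. Define P̄_c(R) = exp(−(π/2)·λ_u·H·(π·(η_N/η_L)^{1/2}·2^{R/2} − 2·H)) and C_s(R) = λ_u·(R − R_e)·P̄_c(R). Then: (i) there exists a unique R* > R_e satisfying the first-order condition (ln 2/4)·π²·λ_u·H·(η_N/η_L)^{1/2}·2^{R*/2}·(R* − R_e) = 1; (ii) C_s is strictly increasing on [R_e, R*] and strictly decreasing on [R*, ∞), so R* is the unique maximizer of C_s over [R_e, ∞); (iii) R* = R_e + (2/ln 2)·w, where w is the unique positive real satisfying w·e^w = 2^{1 − R_e/2}·η_L^{1/2}/(π²·λ_u·H·η_N^{1/2}). -/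
/-!
Write `G(R)` for the left-hand side of the first-order condition. Differentiating,
`C_s'(R) = λ_u P̄_c(R) (1 - G(R))`, so the sign of `C_s'` is that of `1 - G`. The substitution
`w = (log 2 / 2) (R - R_e)` turns `G(R)` into `w e^w / Y`, with `Y` the right-hand side of (iii).
Since `w ↦ w e^w` increases strictly from `0` to `∞` on `[0, ∞)`, there is a unique `w > 0`
with `w e^w = Y`; then `G` increases through `1` exactly at `R* = R_e + (2 / log 2) w`, where `C_s`
switches from increasing to decreasing.
-/

open Real Set

theorem strictMonoOn_mul_exp : StrictMonoOn (fun w : ℝ => w * exp w) (Ici 0) :=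
  fun x hx _ _ hxy => mul_lt_mul hxy (exp_le_exp.2 hxy.le) (exp_pos x) (le_trans hx hxy.le)

theorem exists_pos_mul_exp_eq {y : ℝ} (hy : 0 < y) : ∃ w, 0 < w ∧ w * exp w = y := by
  have hcont : ContinuousOn (fun w : ℝ => w * exp w) (Icc 0 y) := by fun_prop
  have hmem : y ∈ Icc (0 * exp 0) (y * exp y) :=
    ⟨by simpa using hy.le, le_mul_of_one_le_right hy.le (one_le_exp hy.le)⟩
  obtain ⟨w, -, hwy⟩ := intermediate_value_Icc hy.le hcont hmem
  have hwy : w * exp w = y := hwy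
  exact ⟨w, pos_of_mul_pos_left (hwy ▸ hy) (exp_pos w).le, hwy⟩

theorem strictMonoOn_affine_mul_exp_div {c Y : ℝ} (Re : ℝ) (hc : 0 < c) (hY : 0 < Y) :
    StrictMonoOn (fun R => c * (R - Re) * exp (c * (R - Re)) / Y) (Ici Re) := by
  intro x hx y hy hxy
  have hcx : 0 ≤ c * (x - Re) := mul_nonneg hc.le (sub_nonneg.2 hx)
  have hcy : 0 ≤ c * (y - Re) := mul_nonneg hc.le (sub_nonneg.2 hy)
  exact div_lt_div_of_pos_right
    (strictMonoOn_mul_exp hcx hcy (mul_lt_mul_of_pos_left (sub_lt_sub_right hxy Re) hc)) hY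

section
variable {α β : Type*} [LinearOrder α] [Preorder β]

theorem StrictMonoOn.lt_of_strictAntiOn_Ici {f : α → β} {a r x : α}
    (hmono : StrictMonoOn f (Icc a r)) (hanti : StrictAntiOn f (Ici r)) (hx : a ≤ x)
    (hxr : x ≠ r) : f x < f r := by
  rcases hxr.lt_or_gt with hlt | hgt
  · exact hmono ⟨hx, hlt.le⟩ ⟨hx.trans hlt.le, le_rfl⟩ hlt
  · exact hanti self_mem_Ici hgt.le hgt

end

section
variable {f p g : ℝ → ℝ} {a r : ℝ} (hf : ∀ x, HasDerivAt f (p x * (1 - g x)) x)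
  (hp : ∀ x, 0 < p x) (hg : StrictMonoOn g (Ici a)) (har : a ≤ r) (hgr : g r = 1)
include hf hp hg har hgr

theorem strictMonoOn_Icc_of_hasDerivAt_mul_one_sub : StrictMonoOn f (Icc a r) := by
  refine strictMonoOn_of_deriv_pos (convex_Icc a r)
    (fun x _ => (hf x).continuousAt.continuousWithinAt) fun x hx => ?_
  rw [interior_Icc] at hx
  have hgx : g x < 1 := hgr ▸ hg (mem_Ici.2 hx.1.le) (mem_Ici.2 har) hx.2
  rw [(hf x).deriv]
  exact mul_pos (hp x) (sub_pos.2 hgx)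

theorem strictAntiOn_Ici_of_hasDerivAt_mul_one_sub : StrictAntiOn f (Ici r) := by
  refine strictAntiOn_of_deriv_neg (convex_Ici r)
    (fun x _ => (hf x).continuousAt.continuousWithinAt) fun x hx => ?_
  rw [interior_Ici] at hx
  have hgx : 1 < g x := hgr ▸ hg (mem_Ici.2 har) (mem_Ici.2 (har.trans hx.le)) hx
  rw [(hf x).deriv]
  exact mul_neg_of_pos_of_neg (hp x) (sub_neg.2 hgx)

end

theorem hasDerivAt_secrecyCapacity (lu H s Re R : ℝ) :
    HasDerivAt
      (fun R => lu * (R - Re) * exp (-(π / 2) * lu * H * (π * s * (2:ℝ) ^ (R / 2) - 2 * H)))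
      (lu * exp (-(π / 2) * lu * H * (π * s * (2:ℝ) ^ (R / 2) - 2 * H))
        * (1 - log 2 / 4 * π ^ 2 * lu * H * s * (2:ℝ) ^ (R / 2) * (R - Re))) R := by
  have hpow : HasDerivAt (fun R : ℝ => (2:ℝ) ^ (R / 2)) (log 2 * (1 / 2) * 2 ^ (R / 2)) R :=
    ((hasDerivAt_id R).div_const 2).const_rpow two_pos
  have hexp := (((hpow.const_mul (π * s)).sub_const (2 * H)).const_mul (-(π / 2) * lu * H)).exp
  have hlin : HasDerivAt (fun R => lu * (R - Re)) lu R := by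
    simpa using ((hasDerivAt_id R).sub_const Re).const_mul lu
  refine (hlin.mul hexp).congr_deriv ?_
  ring

theorem first_order_term_eq_mul_exp_div (lu H eL eN Re R : ℝ) (hlu : 0 < lu) (hH : 0 < H)
    (heL : 0 < eL) (heN : 0 < eN) :
    log 2 / 4 * π ^ 2 * lu * H * √(eN / eL) * (2:ℝ) ^ (R / 2) * (R - Re)
      = log 2 / 2 * (R - Re) * exp (log 2 / 2 * (R - Re))
        / ((2:ℝ) ^ (1 - Re / 2) * √eL / (π ^ 2 * lu * H * √eN)) := by
  have h1 : exp (log 2 / 2 * (R - Re)) = 2 ^ (R / 2) * 2 ^ (-(Re / 2)) := by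
    rw [rpow_def_of_pos two_pos, rpow_def_of_pos two_pos, ← exp_add]
    ring_nf
  have h2 : (2:ℝ) ^ (1 - Re / 2) = 2 * 2 ^ (-(Re / 2)) := by
    rw [sub_eq_add_neg, rpow_add two_pos, rpow_one]
  have hsL := sqrt_pos.2 heL
  have hsN := sqrt_pos.2 heN
  have hpow : (0:ℝ) < 2 ^ (-(Re / 2)) := by positivity
  rw [sqrt_div heN.le, h1, h2]
  field_simp
  ring

theorem optimal_codeword_rate_general
    (lu H eL eN Re : ℝ) (hlu : 0 < lu) (hH : 0 < H) (heL : 0 < eL) (heN : 0 < eN)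
    (Pc Cs : ℝ → ℝ)
    (hPc : ∀ R : ℝ, Pc R
      = Real.exp (-(π / 2) * lu * H * (π * Real.sqrt (eN / eL) * (2 : ℝ) ^ (R / 2) - 2 * H)))
    (hCs : ∀ R : ℝ, Cs R = lu * (R - Re) * Pc R) :
    ∃ Rstar : ℝ, Rstar > Re ∧
      -- (i) first-order condition, with uniqueness of its solution on (Re, ∞)
      (Real.log 2 / 4) * π ^ 2 * lu * H * Real.sqrt (eN / eL)
          * (2 : ℝ) ^ (Rstar / 2) * (Rstar - Re) = 1 ∧
      (∀ R : ℝ, R > Re →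
        (Real.log 2 / 4) * π ^ 2 * lu * H * Real.sqrt (eN / eL)
            * (2 : ℝ) ^ (R / 2) * (R - Re) = 1 → R = Rstar) ∧
      -- (ii) monotonicity and unique maximizer over [Re, ∞)
      StrictMonoOn Cs (Icc Re Rstar) ∧
      StrictAntiOn Cs (Ici Rstar) ∧
      (∀ R ∈ Ici Re, R ≠ Rstar → Cs R < Cs Rstar) ∧
      -- (iii) Lambert-W expression
      (∀ w : ℝ, 0 < w →
        w * Real.exp w
          = (2 : ℝ) ^ (1 - Re / 2) * Real.sqrt eL / (π ^ 2 * lu * H * Real.sqrt eN) →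
        Rstar = Re + (2 / Real.log 2) * w) := by
  set Y := (2 : ℝ) ^ (1 - Re / 2) * √eL / (π ^ 2 * lu * H * √eN)
  have hY : 0 < Y := by positivity
  have hc : 0 < log 2 / 2 := by positivity
  obtain ⟨w, hw, hwY⟩ := exists_pos_mul_exp_eq hY
  set Rstar := Re + 2 / log 2 * w
  have hw_eq : log 2 / 2 * (Rstar - Re) = w := by
    simp only [Rstar, add_sub_cancel_left]; field_simp
  have hRstar : Re < Rstar := lt_add_of_pos_right Re (by positivity)
  set G := fun R => log 2 / 4 * π ^ 2 * lu * H * √(eN / eL) * (2 : ℝ) ^ (R / 2) * (R - Re)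
  have hG : G = fun R => log 2 / 2 * (R - Re) * exp (log 2 / 2 * (R - Re)) / Y :=
    funext (first_order_term_eq_mul_exp_div lu H eL eN Re · hlu hH heL heN)
  have hG_mono : StrictMonoOn G (Ici Re) := hG ▸ strictMonoOn_affine_mul_exp_div Re hc hY
  have hG_Rstar : G Rstar = 1 := by rw [hG]; simp only [hw_eq, hwY, div_self hY.ne']
  have hCs' : ∀ R, HasDerivAt Cs (lu * Pc R * (1 - G R)) R := by
    have : Cs = _ := funext fun R => by rw [hCs, hPc]
    simpa only [this, hPc] using hasDerivAt_secrecyCapacity lu H √(eN / eL) Re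
  have hPc_pos : ∀ R, 0 < lu * Pc R := fun R => by rw [hPc]; positivity
  have hmono := strictMonoOn_Icc_of_hasDerivAt_mul_one_sub hCs' hPc_pos hG_mono hRstar.le hG_Rstar
  have hanti := strictAntiOn_Ici_of_hasDerivAt_mul_one_sub hCs' hPc_pos hG_mono hRstar.le hG_Rstar
  refine ⟨Rstar, hRstar, hG_Rstar, fun R hR hGR => ?_, hmono, hanti,
    fun R hR hne => hmono.lt_of_strictAntiOn_Ici hanti hR hne, fun w' hw' hw'Y => ?_⟩
  · exact hG_mono.injOn (mem_Ici.2 hR.le) (mem_Ici.2 hRstar.le) (hGR.trans hG_Rstar.symm)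
  · rw [strictMonoOn_mul_exp.injOn (mem_Ici.2 hw'.le) (mem_Ici.2 hw.le) (hw'Y.trans hwY.symm)]

/-- Theorem 3 of the paper: the optimal codeword rate maximizing the secrecy transmission
capacity `C_s(R) = λ_u (R - R_e) P̄_c(R)`, with its first-order characterization and its
expression via the Lambert W function. -/
theorem optimal_codeword_rate
    (lu H eL eN Re : ℝ) (hlu : 0 < lu) (hH : 0 < H) (heL : 0 < eL) (heN : 0 < eN)
    (hRe : 0 ≤ Re)
    (Pc Cs : ℝ → ℝ)
    (hPc : ∀ R : ℝ, Pc R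
      = Real.exp (-(π / 2) * lu * H * (π * Real.sqrt (eN / eL) * (2 : ℝ) ^ (R / 2) - 2 * H)))
    (hCs : ∀ R : ℝ, Cs R = lu * (R - Re) * Pc R) :
    ∃ Rstar : ℝ, Rstar > Re ∧
      -- (i) first-order condition, with uniqueness of its solution on (Re, ∞)
      (Real.log 2 / 4) * π ^ 2 * lu * H * Real.sqrt (eN / eL)
          * (2 : ℝ) ^ (Rstar / 2) * (Rstar - Re) = 1 ∧
      (∀ R : ℝ, R > Re →
        (Real.log 2 / 4) * π ^ 2 * lu * H * Real.sqrt (eN / eL)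
            * (2 : ℝ) ^ (R / 2) * (R - Re) = 1 → R = Rstar) ∧
      -- (ii) monotonicity and unique maximizer over [Re, ∞)
      StrictMonoOn Cs (Icc Re Rstar) ∧
      StrictAntiOn Cs (Ici Rstar) ∧
      (∀ R ∈ Ici Re, R ≠ Rstar → Cs R < Cs Rstar) ∧
      -- (iii) Lambert-W expression
      (∀ w : ℝ, 0 < w →
        w * Real.exp w
          = (2 : ℝ) ^ (1 - Re / 2) * Real.sqrt eL / (π ^ 2 * lu * H * Real.sqrt eN) →
        Rstar = Re + (2 / Real.log 2) * w) :=
  optimal_codeword_rate_general lu H eL eN Re hlu hH heL heN Pc Cs hPc hCs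
end

section
/- Let λ_u > 0, λ_e ≥ 0, D ≥ 0, H > 0, η_L > 0, η_N > 0 and R_e ≥ 0. Define P̄_c(R) = exp(−(π/2)·λ_u·H·(π·(η_N/η_L)^{1/2}·2^{R/2} − 2·H)), the thinned transmitter density λ_u' = λ_u·exp(−π·λ_e·D²), and C_s(R) = λ_u'·(R − R_e)·P̄_c(R). Then there exists a unique R* > R_e satisfying (ln 2/4)·π²·λ_u·H·(η_N/η_L)^{1/2}·2^{R*/2}·(R* − R_e) = 1, C_s is strictly increasing on [R_e, R*] and strictly decreasing on [R*, ∞), and R* is the unique maximizer of C_s over [R_e, ∞); moreover R* = R_e + (2/ln 2)·w where w is the unique positive real with w·e^w = 2^{1 − R_e/2}·η_L^{1/2}/(π²·λ_u·H·η_N^{1/2}). -/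
open Real Set

/-!
The derivative of `C_s(R) = λ (R - R_e) e^{φ(R)}` is `λ e^{φ(R)} (1 - g(R))`, where
`g(R) = c · 2^{R/2} · (R - R_e)` is the left-hand side of the first-order condition. Since `g`
vanishes at `R_e`, is continuous, strictly increasing on `[R_e, ∞)` and unbounded, it crosses `1`
exactly once, at `R*`; the sign of `1 - g` then gives the monotonicity of `C_s` on either side.
Substituting `R = R_e + (2 / ln 2) w` turns `g(R) = 1` into the Lambert equation `w e^w = const`.
-/

/-- The first-order condition `C_s'(R) = 0` reads `focTerm c R_e R = 1`. -/
noncomputable def focTerm (c a R : ℝ) : ℝ := c * 2 ^ (R / 2) * (R - a)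

section FirstOrderCondition

variable {c : ℝ} (a : ℝ)

@[simp]
lemma focTerm_self : focTerm c a a = 0 := by simp [focTerm]

lemma continuous_focTerm : Continuous (focTerm c a) := by
  unfold focTerm
  fun_prop (disch := norm_num)

lemma strictMonoOn_focTerm (hc : 0 < c) : StrictMonoOn (focTerm c a) (Ici a) := by
  intro x hx y _ hxy
  have hpow : (2 : ℝ) ^ (x / 2) ≤ 2 ^ (y / 2) :=
    rpow_le_rpow_of_exponent_le one_le_two (by linarith)
  calc c * 2 ^ (x / 2) * (x - a) ≤ c * 2 ^ (y / 2) * (x - a) := by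
        gcongr
        exact sub_nonneg.2 hx
    _ < c * 2 ^ (y / 2) * (y - a) := by gcongr

lemma one_le_focTerm_add_inv (hc : 0 < c) : 1 ≤ focTerm c a (a + (c * 2 ^ (a / 2))⁻¹) := by
  have hpos : 0 < c * (2 : ℝ) ^ (a / 2) := by positivity
  calc (1 : ℝ) = c * 2 ^ (a / 2) * (c * 2 ^ (a / 2))⁻¹ := (mul_inv_cancel₀ hpos.ne').symm
    _ ≤ focTerm c a (a + (c * 2 ^ (a / 2))⁻¹) := by
        rw [focTerm, add_sub_cancel_left]
        gcongr
        · norm_num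
        · exact le_add_of_nonneg_right (inv_nonneg.2 hpos.le)

lemma existsUnique_focTerm_eq_one (hc : 0 < c) : ∃! r, a < r ∧ focTerm c a r = 1 := by
  set M := a + (c * 2 ^ (a / 2))⁻¹
  have haM : a ≤ M := le_add_of_nonneg_right (by positivity)
  obtain ⟨r, hrM, hr⟩ := intermediate_value_Icc haM (continuous_focTerm a).continuousOn
    ⟨(focTerm_self a).trans_le zero_le_one, one_le_focTerm_add_inv a hc⟩
  have har : a < r := hrM.1.lt_of_ne fun h => by simp [← h] at hr
  refine ⟨r, ⟨har, hr⟩, fun s ⟨has, hs⟩ => ?_⟩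
  exact (strictMonoOn_focTerm a hc).injOn has.le har.le (hs.trans hr.symm)

lemma focTerm_add_two_div_log_two_mul (w : ℝ) :
    focTerm c a (a + 2 / log 2 * w) = 2 * c * 2 ^ (a / 2) / log 2 * (w * exp w) := by
  have hlog : log 2 ≠ 0 := (log_pos one_lt_two).ne'
  have hexp : (2 : ℝ) ^ (w / log 2) = exp w := by
    rw [rpow_def_of_pos two_pos, mul_div_cancel₀ w hlog]
  have hsplit : (a + 2 / log 2 * w) / 2 = a / 2 + w / log 2 := by field_simp
  rw [focTerm, hsplit, rpow_add two_pos, hexp]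
  field_simp
  ring

lemma focTerm_add_two_div_log_two_mul_eq_one (hc : 0 < c) {w : ℝ}
    (hw : w * exp w = log 2 / (2 * c * 2 ^ (a / 2))) : focTerm c a (a + 2 / log 2 * w) = 1 := by
  have : 0 < 2 * c * (2 : ℝ) ^ (a / 2) := by positivity
  rw [focTerm_add_two_div_log_two_mul, hw]
  field_simp

end FirstOrderCondition

lemma lambert_constant_eq (lu H eL eN a : ℝ) (hlu : 0 < lu) (hH : 0 < H) (heL : 0 < eL)
    (heN : 0 < eN) :
    (2 : ℝ) ^ (1 - a / 2) * √eL / (π ^ 2 * lu * H * √eN)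
      = log 2 / (2 * (log 2 / 4 * π ^ 2 * lu * H * √(eN / eL)) * 2 ^ (a / 2)) := by
  have hlog := log_pos one_lt_two
  have heL' := sqrt_pos.2 heL
  have heN' := sqrt_pos.2 heN
  rw [sub_eq_add_neg, rpow_add two_pos, rpow_neg two_pos.le, rpow_one, sqrt_div heN.le]
  field_simp
  ring

lemma hasDerivAt_mul_sub_mul_exp {φ : ℝ → ℝ} {φ' : ℝ} (K a : ℝ) {x : ℝ}
    (hφ : HasDerivAt φ φ' x) :
    HasDerivAt (fun R => K * (R - a) * exp (φ R)) (K * exp (φ x) * (1 + (x - a) * φ')) x :=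
  (((hasDerivAt_id' x).sub_const a).const_mul K |>.mul hφ.exp).congr_deriv (by ring)

/-- The exponent of the approximate connection probability `P̄_c` has derivative
`-c · 2^{R/2}`, with `c` the constant of the first-order condition. -/
lemma hasDerivAt_connection_exponent (lu H s x : ℝ) :
    HasDerivAt (fun R : ℝ => -(π / 2) * lu * H * (π * s * 2 ^ (R / 2) - 2 * H))
      (-(log 2 / 4 * π ^ 2 * lu * H * s * 2 ^ (x / 2))) x := by
  have hpow := ((hasDerivAt_id' x).div_const 2).const_rpow two_pos
  exact (((hpow.const_mul (π * s)).sub_const (2 * H)).const_mul (-(π / 2) * lu * H)).congr_deriv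
    (by ring)

lemma strictMonoOn_Icc_and_strictAntiOn_Ici_of_deriv {F g p : ℝ → ℝ} {a r : ℝ}
    (hF : ∀ x, HasDerivAt F (p x * (1 - g x)) x) (hp : ∀ x, 0 < p x)
    (hg : StrictMonoOn g (Ici a)) (har : a < r) (hr : g r = 1) :
    StrictMonoOn F (Icc a r) ∧ StrictAntiOn F (Ici r) := by
  have hcont : Continuous F := continuous_iff_continuousAt.2 fun x => (hF x).continuousAt
  constructor
  · refine strictMonoOn_of_deriv_pos (convex_Icc a r) hcont.continuousOn fun x hx => ?_
    rw [interior_Icc] at hx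
    have : g x < 1 := hr ▸ hg hx.1.le har.le hx.2
    rw [(hF x).deriv]
    exact mul_pos (hp x) (sub_pos.2 this)
  · refine strictAntiOn_of_deriv_neg (convex_Ici r) hcont.continuousOn fun x hx => ?_
    rw [interior_Ici] at hx
    have : 1 < g x := hr ▸ hg har.le (har.trans hx).le hx
    rw [(hF x).deriv]
    exact mul_neg_of_pos_of_neg (hp x) (sub_neg.2 this)

lemma lt_of_strictMonoOn_Icc_of_strictAntiOn_Ici {F : ℝ → ℝ} {a r : ℝ}
    (hmono : StrictMonoOn F (Icc a r)) (hanti : StrictAntiOn F (Ici r)) (har : a ≤ r)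
    {x : ℝ} (hx : x ∈ Ici a) (hxr : x ≠ r) : F x < F r := by
  rcases hxr.lt_or_gt with h | h
  · exact hmono ⟨hx, h.le⟩ ⟨har, le_rfl⟩ h
  · exact hanti self_mem_Ici h.le h

theorem optimal_codeword_rate_guard_zone_general
    (lu le D H eL eN Re : ℝ) (hlu : 0 < lu)
    (hH : 0 < H) (heL : 0 < eL) (heN : 0 < eN)
    (Pc Cs : ℝ → ℝ) (lu' : ℝ)
    (hPc : ∀ R : ℝ, Pc R
      = Real.exp (-(π / 2) * lu * H * (π * Real.sqrt (eN / eL) * (2 : ℝ) ^ (R / 2) - 2 * H)))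
    (hlu' : lu' = lu * Real.exp (-(π * le * D ^ 2)))
    (hCs : ∀ R : ℝ, Cs R = lu' * (R - Re) * Pc R) :
    ∃ Rstar : ℝ, Rstar > Re ∧
      -- first-order condition, with uniqueness of its solution on (Re, ∞)
      (Real.log 2 / 4) * π ^ 2 * lu * H * Real.sqrt (eN / eL)
          * (2 : ℝ) ^ (Rstar / 2) * (Rstar - Re) = 1 ∧
      (∀ R : ℝ, R > Re →
        (Real.log 2 / 4) * π ^ 2 * lu * H * Real.sqrt (eN / eL)
            * (2 : ℝ) ^ (R / 2) * (R - Re) = 1 → R = Rstar) ∧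
      -- monotonicity and unique maximizer over [Re, ∞)
      StrictMonoOn Cs (Icc Re Rstar) ∧
      StrictAntiOn Cs (Ici Rstar) ∧
      (∀ R ∈ Ici Re, R ≠ Rstar → Cs R < Cs Rstar) ∧
      -- Lambert-W expression
      (∀ w : ℝ, 0 < w →
        w * Real.exp w
          = (2 : ℝ) ^ (1 - Re / 2) * Real.sqrt eL / (π ^ 2 * lu * H * Real.sqrt eN) →
        Rstar = Re + (2 / Real.log 2) * w) := by
  set c := log 2 / 4 * π ^ 2 * lu * H * √(eN / eL)
  have hc : 0 < c := by have := log_pos one_lt_two; positivity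
  obtain ⟨r, ⟨hr, hfoc⟩, huniq⟩ := existsUnique_focTerm_eq_one Re hc
  have hderiv : ∀ x, HasDerivAt Cs (lu' * Pc x * (1 - focTerm c Re x)) x := fun x => by
    convert hasDerivAt_mul_sub_mul_exp lu' Re (hasDerivAt_connection_exponent lu H √(eN / eL) x)
      using 1
    · exact funext fun R => by rw [hCs, hPc]
    · rw [hPc, focTerm]; ring
  have hpos : ∀ x, 0 < lu' * Pc x := fun x => by rw [hlu', hPc]; positivity
  obtain ⟨hmono, hanti⟩ := strictMonoOn_Icc_and_strictAntiOn_Ici_of_deriv hderiv hpos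
    (strictMonoOn_focTerm Re hc) hr hfoc
  refine ⟨r, hr, hfoc, fun R hR hR1 => huniq R ⟨hR, hR1⟩, hmono, hanti,
    fun R => lt_of_strictMonoOn_Icc_of_strictAntiOn_Ici hmono hanti hr.le, fun w hw hweq => ?_⟩
  refine (huniq _ ⟨lt_add_of_pos_right Re (by positivity), ?_⟩).symm
  exact focTerm_add_two_div_log_two_mul_eq_one Re hc
    (hweq.trans (lambert_constant_eq lu H eL eN Re hlu hH heL heN))

/-- Theorem 5 of the paper: the optimal codeword rate with a secrecy guard zone, i.e. for the
objective `C_s(R) = λ_u' (R - R_e) P̄_c(R)` with thinned density `λ_u' = λ_u exp(-π λ_e D²)`. -/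
theorem optimal_codeword_rate_guard_zone
    (lu le D H eL eN Re : ℝ) (hlu : 0 < lu) (hle : 0 ≤ le) (hD : 0 ≤ D)
    (hH : 0 < H) (heL : 0 < eL) (heN : 0 < eN) (hRe : 0 ≤ Re)
    (Pc Cs : ℝ → ℝ) (lu' : ℝ)
    (hPc : ∀ R : ℝ, Pc R
      = Real.exp (-(π / 2) * lu * H * (π * Real.sqrt (eN / eL) * (2 : ℝ) ^ (R / 2) - 2 * H)))
    (hlu' : lu' = lu * Real.exp (-(π * le * D ^ 2)))
    (hCs : ∀ R : ℝ, Cs R = lu' * (R - Re) * Pc R) :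
    ∃ Rstar : ℝ, Rstar > Re ∧
      -- first-order condition, with uniqueness of its solution on (Re, ∞)
      (Real.log 2 / 4) * π ^ 2 * lu * H * Real.sqrt (eN / eL)
          * (2 : ℝ) ^ (Rstar / 2) * (Rstar - Re) = 1 ∧
      (∀ R : ℝ, R > Re →
        (Real.log 2 / 4) * π ^ 2 * lu * H * Real.sqrt (eN / eL)
            * (2 : ℝ) ^ (R / 2) * (R - Re) = 1 → R = Rstar) ∧
      -- monotonicity and unique maximizer over [Re, ∞)
      StrictMonoOn Cs (Icc Re Rstar) ∧
      StrictAntiOn Cs (Ici Rstar) ∧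
      (∀ R ∈ Ici Re, R ≠ Rstar → Cs R < Cs Rstar) ∧
      -- Lambert-W expression
      (∀ w : ℝ, 0 < w →
        w * Real.exp w
          = (2 : ℝ) ^ (1 - Re / 2) * Real.sqrt eL / (π ^ 2 * lu * H * Real.sqrt eN) →
        Rstar = Re + (2 / Real.log 2) * w) :=
  optimal_codeword_rate_guard_zone_general lu le D H eL eN Re hlu hH heL heN Pc Cs lu' hPc hlu' hCs
end

section
/- Let c > 0 and let r₁ < r₂ be real numbers. Suppose w₁ > 0 and w₂ > 0 satisfy w₁·e^{w₁} = c·2^{−r₁} and w₂·e^{w₂} = c·2^{−r₂} (so w₂ < w₁). Then: (i) if w₂ ≥ 1, then r₁ + (2/ln 2)·w₁ > r₂ + (2/ln 2)·w₂; (ii) if w₁ ≤ 1, then r₁ + (2/ln 2)·w₁ < r₂ + (2/ln 2)·w₂. -/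
/-- Corollary 5 of the paper: the optimal codeword rate `r + (2/ln 2) W₀(c·2^{-r})` is
decreasing in `r` while `W₀ ≥ 1` and increasing while `W₀ ≤ 1`, stated for explicit positive
solutions of the Lambert equation. -/
theorem optimal_rate_monotone_pattern
    (c : ℝ) (hc : 0 < c) (r₁ r₂ : ℝ) (hr : r₁ < r₂) (w₁ w₂ : ℝ)
    (hw₁ : 0 < w₁) (hw₂ : 0 < w₂)
    (heq₁ : w₁ * Real.exp w₁ = c * (2 : ℝ) ^ (-r₁))
    (heq₂ : w₂ * Real.exp w₂ = c * (2 : ℝ) ^ (-r₂)) :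
    (1 ≤ w₂ → r₁ + (2 / Real.log 2) * w₁ > r₂ + (2 / Real.log 2) * w₂) ∧
    (w₁ ≤ 1 → r₁ + (2 / Real.log 2) * w₁ < r₂ + (2 / Real.log 2) * w₂) := by
  have hl2 : 0 < Real.log 2 := Real.log_pos one_lt_two
  -- take logs of the Lambert equations
  have hlog : ∀ r w : ℝ, 0 < w → w * Real.exp w = c * (2 : ℝ) ^ (-r) →
      Real.log w + w = Real.log c + (-r) * Real.log 2 := by
    intro r w hw heq
    have h := congrArg Real.log heq
    rwa [Real.log_mul hw.ne' (Real.exp_ne_zero _), Real.log_exp,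
      Real.log_mul hc.ne' (Real.rpow_pos_of_pos two_pos _).ne',
      Real.log_rpow two_pos] at h
  have h1 := hlog r₁ w₁ hw₁ heq₁
  have h2 := hlog r₂ w₂ hw₂ heq₂
  -- w₂ < w₁
  have hww : w₂ < w₁ := by
    by_contra h
    push_neg at h
    have hle : w₁ * Real.exp w₁ ≤ w₂ * Real.exp w₂ :=
      mul_le_mul h (Real.exp_le_exp.2 h) (Real.exp_pos _).le hw₂.le
    have hpow : (2 : ℝ) ^ (-r₂) < (2 : ℝ) ^ (-r₁) :=
      Real.rpow_lt_rpow_left_iff one_lt_two |>.2 (by linarith)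
    have : c * (2 : ℝ) ^ (-r₂) < c * (2 : ℝ) ^ (-r₁) :=
      mul_lt_mul_of_pos_left hpow hc
    linarith [heq₁, heq₂]
  have e1 : (r₁ + (2 / Real.log 2) * w₁) * Real.log 2 =
      r₁ * Real.log 2 + 2 * w₁ := by field_simp
  have e2 : (r₂ + (2 / Real.log 2) * w₂) * Real.log 2 =
      r₂ * Real.log 2 + 2 * w₂ := by field_simp
  constructor
  · intro hw2
    have hq : Real.log (w₁ / w₂) < w₁ / w₂ - 1 :=
      Real.log_lt_sub_one_of_pos (div_pos hw₁ hw₂) (by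
        intro h
        have := (div_eq_one_iff_eq hw₂.ne').1 h
        linarith)
    rw [Real.log_div hw₁.ne' hw₂.ne'] at hq
    have hdiv : w₁ / w₂ - 1 ≤ w₁ - w₂ := by
      rw [div_sub_one hw₂.ne', div_le_iff₀ hw₂]
      nlinarith
    have key : w₂ - Real.log w₂ < w₁ - Real.log w₁ := by linarith
    have : (r₂ + (2 / Real.log 2) * w₂) * Real.log 2 <
        (r₁ + (2 / Real.log 2) * w₁) * Real.log 2 := by
      rw [e1, e2]; linarith
    exact lt_of_mul_lt_mul_right this hl2.le
  · intro hw1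
    have hq : Real.log (w₂ / w₁) < w₂ / w₁ - 1 :=
      Real.log_lt_sub_one_of_pos (div_pos hw₂ hw₁) (by
        intro h
        have := (div_eq_one_iff_eq hw₁.ne').1 h
        linarith)
    rw [Real.log_div hw₂.ne' hw₁.ne'] at hq
    have hdiv : w₂ / w₁ - 1 ≤ w₂ - w₁ := by
      rw [div_sub_one hw₁.ne', div_le_iff₀ hw₁]
      nlinarith
    have key : w₁ - Real.log w₁ < w₂ - Real.log w₂ := by linarith
    have : (r₁ + (2 / Real.log 2) * w₁) * Real.log 2 <
        (r₂ + (2 / Real.log 2) * w₂) * Real.log 2 := by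
      rw [e1, e2]; linarith
    exact lt_of_mul_lt_mul_right this hl2.le
end

section
/- Let λ_e > 0, λ_u > 0, H > 0, K ≥ 0, η_L > 0, η_N > 0. Define, for Q > 0, T(Q) = ((η_L/η_N)^{1/2}/(2Q))·exp(−(η_N/η_L)^{1/2}·Q·(H² + K²)) + (1 + H·Q)·exp(−H·Q)/Q² − (1 + Q·√(H² + K²))·exp(−Q·√(H² + K²))/Q², and F(Q) = 1 − exp(−2π·λ_e·exp(π·λ_u·H²)·T(Q)). Then T(Q) > 0 for all Q > 0, F is strictly decreasing on (0, ∞), F(Q) → 1 as Q → 0⁺, F(Q) → 0 as Q → ∞, and for every ε ∈ (0, 1) there exists a unique Q > 0 with F(Q) = ε. -/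
/-!
The last two terms of `T(Q)` combine into `∫_H^{√(H²+K²)} x e^{-Qx} dx`, so
`T(Q) = b e^{-kQ} / Q + ∫_H^{√(H²+K²)} x e^{-Qx} dx` with `b, k > 0`. The first summand is
positive, strictly decreasing, tends to `∞` at `0⁺` and to `0` at `∞`; the integral is nonnegative,
continuous, decreasing in `Q` and tends to `0` at `∞`. As `t ↦ 1 - e^{-ct}` (`c > 0`) is continuous
and strictly increasing with value `0` at `0` and limit `1` at `∞`, `F` is continuous, strictly
decreasing from `1` to `0`, and the intermediate value theorem gives the unique solution.
-/

open Real Set Filter Topology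

section MomentIntegral

theorem integral_mul_exp_neg_mul {Q : ℝ} (hQ : Q ≠ 0) (a b : ℝ) :
    ∫ x in a..b, x * exp (-(Q * x))
      = (1 + Q * a) * exp (-(Q * a)) / Q ^ 2 - (1 + Q * b) * exp (-(Q * b)) / Q ^ 2 := by
  have hderiv : ∀ x, HasDerivAt (fun y => -((1 + Q * y) * exp (-(Q * y))) / Q ^ 2)
      (x * exp (-(Q * x))) x := by
    intro x
    have hlin : HasDerivAt (fun y => Q * y) Q x := by simpa using (hasDerivAt_id x).const_mul Q
    refine ((((hlin.const_add 1).mul hlin.fun_neg.exp).fun_neg).div_const (Q ^ 2)).congr_deriv ?_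
    field_simp
    ring
  rw [intervalIntegral.integral_eq_sub_of_hasDerivAt (fun x _ => hderiv x)
    (Continuous.intervalIntegrable (by fun_prop) a b)]
  ring

theorem continuous_integral_mul_exp_neg_mul (a b : ℝ) :
    Continuous fun Q => ∫ x in a..b, x * exp (-(Q * x)) := by
  fun_prop

variable {a b : ℝ}

theorem integral_mul_exp_neg_mul_nonneg (ha : 0 ≤ a) (hab : a ≤ b) (Q : ℝ) :
    0 ≤ ∫ x in a..b, x * exp (-(Q * x)) :=
  intervalIntegral.integral_nonneg hab fun _ hx => mul_nonneg (ha.trans hx.1) (exp_pos _).le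

theorem antitone_integral_mul_exp_neg_mul (ha : 0 ≤ a) (hab : a ≤ b) :
    Antitone fun Q => ∫ x in a..b, x * exp (-(Q * x)) := by
  intro Q₁ Q₂ hQ
  refine intervalIntegral.integral_mono_on hab (Continuous.intervalIntegrable (by fun_prop) a b)
    (Continuous.intervalIntegrable (by fun_prop) a b) fun x hx => ?_
  have hx₀ : 0 ≤ x := ha.trans hx.1
  gcongr

theorem tendsto_one_add_mul_mul_exp_neg_div_sq_atTop {c : ℝ} (hc : 0 ≤ c) :
    Tendsto (fun Q => (1 + Q * c) * exp (-(Q * c)) / Q ^ 2) atTop (𝓝 0) := by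
  refine tendsto_of_tendsto_of_tendsto_of_le_of_le' tendsto_const_nhds
    ((tendsto_const_nhds (x := (1 : ℝ))).div_atTop (tendsto_pow_atTop two_ne_zero)) ?_ ?_
  all_goals filter_upwards [eventually_ge_atTop 0] with Q hQ
  · positivity
  · -- `(1 + t) e^{-t} ≤ 1` bounds the term by `1 / Q²`
    gcongr
    calc (1 + Q * c) * exp (-(Q * c)) ≤ exp (Q * c) * exp (-(Q * c)) := by
          gcongr; linarith [add_one_le_exp (Q * c)]
      _ = 1 := by rw [← exp_add, add_neg_cancel, exp_zero]

theorem tendsto_integral_mul_exp_neg_mul_atTop (ha : 0 ≤ a) (hb : 0 ≤ b) :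
    Tendsto (fun Q => ∫ x in a..b, x * exp (-(Q * x))) atTop (𝓝 0) := by
  have hlim := (tendsto_one_add_mul_mul_exp_neg_div_sq_atTop ha).sub
    (tendsto_one_add_mul_mul_exp_neg_div_sq_atTop hb)
  rw [sub_zero] at hlim
  refine hlim.congr' ?_
  filter_upwards [eventually_gt_atTop 0] with Q hQ
  rw [integral_mul_exp_neg_mul hQ.ne']

end MomentIntegral

section DecayingPole

variable {b k : ℝ}

theorem strictAntiOn_div_mul_exp_neg (hb : 0 < b) (hk : 0 ≤ k) :
    StrictAntiOn (fun Q => b / Q * exp (-(k * Q))) (Ioi 0) := by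
  intro Q₁ hQ₁ Q₂ hQ₂ hQ
  rw [mem_Ioi] at hQ₁ hQ₂
  calc b / Q₂ * exp (-(k * Q₂)) < b / Q₁ * exp (-(k * Q₂)) := by gcongr
    _ ≤ b / Q₁ * exp (-(k * Q₁)) := by gcongr

theorem tendsto_div_mul_exp_neg_nhdsGT_zero (hb : 0 < b) (k : ℝ) :
    Tendsto (fun Q => b / Q * exp (-(k * Q))) (𝓝[>] 0) atTop := by
  have hexp : Tendsto (fun Q => exp (-(k * Q))) (𝓝[>] 0) (𝓝 1) := by
    simpa using ((by fun_prop : Continuous fun Q => exp (-(k * Q))).tendsto 0).mono_left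
      nhdsWithin_le_nhds
  simpa only [div_eq_mul_inv] using
    (tendsto_inv_nhdsGT_zero.const_mul_atTop hb).atTop_mul_pos one_pos hexp

theorem tendsto_div_mul_exp_neg_atTop (b : ℝ) (hk : 0 ≤ k) :
    Tendsto (fun Q => b / Q * exp (-(k * Q))) atTop (𝓝 0) := by
  have hdecay : Tendsto (fun Q => exp (-(k * Q)) / Q) atTop (𝓝 0) := by
    refine tendsto_of_tendsto_of_tendsto_of_le_of_le' tendsto_const_nhds
      tendsto_inv_atTop_zero ?_ ?_
    all_goals filter_upwards [eventually_gt_atTop 0] with Q hQ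
    · positivity
    · rw [div_eq_mul_inv]
      refine mul_le_of_le_one_left (inv_pos.2 hQ).le (exp_le_one_iff.2 ?_)
      nlinarith
  have hlim := hdecay.const_mul b
  rw [mul_zero] at hlim
  exact hlim.congr fun Q => by ring

end DecayingPole

noncomputable def outageKernel (b k p q Q : ℝ) : ℝ :=
  b / Q * exp (-(k * Q)) + ∫ x in p..q, x * exp (-(Q * x))

section OutageKernel

variable {b k p q : ℝ}

theorem outageKernel_pos (hb : 0 < b) (hp : 0 ≤ p) (hpq : p ≤ q) {Q : ℝ} (hQ : 0 < Q) :
    0 < outageKernel b k p q Q :=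
  add_pos_of_pos_of_nonneg (by positivity) (integral_mul_exp_neg_mul_nonneg hp hpq Q)

theorem strictAntiOn_outageKernel (hb : 0 < b) (hk : 0 ≤ k) (hp : 0 ≤ p) (hpq : p ≤ q) :
    StrictAntiOn (outageKernel b k p q) (Ioi 0) :=
  (strictAntiOn_div_mul_exp_neg hb hk).add_antitone
    ((antitone_integral_mul_exp_neg_mul hp hpq).antitoneOn _)

theorem continuousOn_outageKernel : ContinuousOn (outageKernel b k p q) (Ioi 0) := by
  refine ((continuousOn_const.div continuousOn_id fun Q hQ => (mem_Ioi.1 hQ).ne').mul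
    (by fun_prop)).add ?_
  exact (continuous_integral_mul_exp_neg_mul p q).continuousOn

theorem tendsto_outageKernel_nhdsGT_zero (hb : 0 < b) :
    Tendsto (outageKernel b k p q) (𝓝[>] 0) atTop :=
  (tendsto_div_mul_exp_neg_nhdsGT_zero hb k).atTop_add
    (((continuous_integral_mul_exp_neg_mul p q).tendsto 0).mono_left nhdsWithin_le_nhds)

theorem tendsto_outageKernel_atTop (hk : 0 ≤ k) (hp : 0 ≤ p) (hq : 0 ≤ q) :
    Tendsto (outageKernel b k p q) atTop (𝓝 0) := by
  have hlim :=
    (tendsto_div_mul_exp_neg_atTop b hk).add (tendsto_integral_mul_exp_neg_mul_atTop hp hq)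
  rwa [add_zero] at hlim

end OutageKernel

section OneSubExpNeg

variable {c : ℝ}

theorem strictMono_one_sub_exp_neg_mul (hc : 0 < c) : StrictMono fun t => 1 - exp (-(c * t)) :=
  fun _ _ h => sub_lt_sub_left (exp_lt_exp.2 (neg_lt_neg (mul_lt_mul_of_pos_left h hc))) 1

theorem tendsto_one_sub_exp_neg_mul_atTop (hc : 0 < c) :
    Tendsto (fun t => 1 - exp (-(c * t))) atTop (𝓝 1) := by
  simpa using tendsto_const_nhds.sub
    (tendsto_exp_atBot.comp (tendsto_neg_atTop_atBot.comp (tendsto_id.const_mul_atTop hc)))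

end OneSubExpNeg

theorem existsUnique_eq_of_strictAntiOn_Ioi {f : ℝ → ℝ} {p a b ε : ℝ}
    (hanti : StrictAntiOn f (Ioi p)) (hcont : ContinuousOn f (Ioi p))
    (hleft : Tendsto f (𝓝[>] p) (𝓝 a)) (hright : Tendsto f atTop (𝓝 b)) (hε : ε ∈ Ioo b a) :
    ∃! x, p < x ∧ f x = ε := by
  obtain ⟨x, hxε, hx⟩ :=
    ((hleft.eventually (eventually_gt_nhds hε.2)).and self_mem_nhdsWithin).exists
  obtain ⟨y, hyε, hxy⟩ :=
    ((hright.eventually (eventually_lt_nhds hε.1)).and (eventually_gt_atTop x)).exists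
  obtain ⟨z, hz, hfz⟩ := intermediate_value_Icc' hxy.le
    (hcont.mono fun w hw => lt_of_lt_of_le (mem_Ioi.1 hx) hw.1) ⟨hyε.le, hxε.le⟩
  have hpz : p < z := lt_of_lt_of_le hx hz.1
  exact ⟨z, ⟨hpz, hfz⟩, fun w hw => hanti.injOn hw.1 hpz (hw.2.trans hfz.symm)⟩

theorem secrecy_outage_strictAnti_unique_solution_general
    (le lu H K eL eN : ℝ) (hle : 0 < le) (hH : 0 < H)
    (heL : 0 < eL) (heN : 0 < eN)
    (T F : ℝ → ℝ)
    (hT : ∀ Q : ℝ, T Q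
      = Real.sqrt (eL / eN) / (2 * Q)
          * Real.exp (-(Real.sqrt (eN / eL) * Q * (H ^ 2 + K ^ 2)))
        + (1 + H * Q) * Real.exp (-(H * Q)) / Q ^ 2
        - (1 + Q * Real.sqrt (H ^ 2 + K ^ 2))
            * Real.exp (-(Q * Real.sqrt (H ^ 2 + K ^ 2))) / Q ^ 2)
    (hF : ∀ Q : ℝ, F Q = 1 - Real.exp (-(2 * π * le * Real.exp (π * lu * H ^ 2) * T Q))) :
    (∀ Q : ℝ, 0 < Q → 0 < T Q) ∧
    StrictAntiOn F (Ioi 0) ∧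
    Tendsto F (nhdsWithin 0 (Ioi 0)) (nhds 1) ∧
    Tendsto F atTop (nhds 0) ∧
    (∀ ε : ℝ, ε ∈ Ioo (0 : ℝ) 1 → ∃! Q : ℝ, 0 < Q ∧ F Q = ε) := by
  set S := √(H ^ 2 + K ^ 2)
  have hHS : H ≤ S := (le_sqrt hH.le (by positivity)).2 (le_add_of_nonneg_right (sq_nonneg K))
  have hb : 0 < √(eL / eN) / 2 := by positivity
  have hk : 0 ≤ √(eN / eL) * (H ^ 2 + K ^ 2) := by positivity
  have hTU : EqOn T (outageKernel (√(eL / eN) / 2) (√(eN / eL) * (H ^ 2 + K ^ 2)) H S) (Ioi 0) :=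
    fun Q hQ => by
      rw [hT, outageKernel, integral_mul_exp_neg_mul (ne_of_gt hQ)]
      ring_nf
  have hTanti : StrictAntiOn T (Ioi 0) :=
    (strictAntiOn_outageKernel hb hk hH.le hHS).congr hTU.symm
  have hTcont : ContinuousOn T (Ioi 0) := continuousOn_outageKernel.congr hTU
  have hT0 : Tendsto T (𝓝[>] 0) atTop :=
    (tendsto_outageKernel_nhdsGT_zero hb).congr' (eventuallyEq_nhdsWithin_of_eqOn hTU).symm
  have hTtop : Tendsto T atTop (𝓝 0) :=
    (tendsto_outageKernel_atTop hk hH.le (hH.le.trans hHS)).congr'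
      (hTU.symm.eventuallyEq_of_mem (Ioi_mem_atTop 0))
  set c := 2 * π * le * exp (π * lu * H ^ 2)
  have hc : 0 < c := by positivity
  have hg : Continuous fun t => 1 - exp (-(c * t)) := by fun_prop
  obtain rfl : F = (fun t => 1 - exp (-(c * t))) ∘ T := funext hF
  have hFanti := (strictMono_one_sub_exp_neg_mul hc).comp_strictAntiOn hTanti
  have hF0 := (tendsto_one_sub_exp_neg_mul_atTop hc).comp hT0
  have hFtop : Tendsto ((fun t => 1 - exp (-(c * t))) ∘ T) atTop (𝓝 0) := by
    simpa using (hg.tendsto 0).comp hTtop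
  exact ⟨fun Q hQ => hTU hQ ▸ outageKernel_pos hb hH.le hHS hQ, hFanti, hF0, hFtop,
    fun ε hε => existsUnique_eq_of_strictAntiOn_Ioi hFanti (hg.comp_continuousOn hTcont) hF0 hFtop
      hε⟩

/-- Properties of the closed-form approximate secrecy outage probability of Corollary 2
(equation (17)) of the paper, as a function of `Q = Q₁ = π² λ_u √β_e / 2`: it is strictly
decreasing, tends to 1 at 0⁺ and to 0 at ∞, so the outage constraint `F(Q) = ε` has a
unique positive solution. -/
theorem secrecy_outage_strictAnti_unique_solution
    (le lu H K eL eN : ℝ) (hle : 0 < le) (hlu : 0 < lu) (hH : 0 < H) (hK : 0 ≤ K)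
    (heL : 0 < eL) (heN : 0 < eN)
    (T F : ℝ → ℝ)
    (hT : ∀ Q : ℝ, T Q
      = Real.sqrt (eL / eN) / (2 * Q)
          * Real.exp (-(Real.sqrt (eN / eL) * Q * (H ^ 2 + K ^ 2)))
        + (1 + H * Q) * Real.exp (-(H * Q)) / Q ^ 2
        - (1 + Q * Real.sqrt (H ^ 2 + K ^ 2))
            * Real.exp (-(Q * Real.sqrt (H ^ 2 + K ^ 2))) / Q ^ 2)
    (hF : ∀ Q : ℝ, F Q = 1 - Real.exp (-(2 * π * le * Real.exp (π * lu * H ^ 2) * T Q))) :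
    (∀ Q : ℝ, 0 < Q → 0 < T Q) ∧
    StrictAntiOn F (Ioi 0) ∧
    Tendsto F (nhdsWithin 0 (Ioi 0)) (nhds 1) ∧
    Tendsto F atTop (nhds 0) ∧
    (∀ ε : ℝ, ε ∈ Ioo (0 : ℝ) 1 → ∃! Q : ℝ, 0 < Q ∧ F Q = ε) :=
  secrecy_outage_strictAnti_unique_solution_general le lu H K eL eN hle hH heL heN T F hT hF
end

section
/- Let λ_u > 0, λ_e > 0, H > 0, D ≥ 0 and ε ∈ (0, 1). Suppose w > 0 satisfies w·e^w = π·λ_e·(H² + D²)·exp(π·λ_u·H²)/ln(1/(1 − ε)). Set β_e = 4·w²/(π⁴·λ_u²·(H² + D²)²) and Q₁ = (π²·λ_u·β_e^{1/2})/2. Then 1 − exp(−(π·λ_e/Q₁)·exp(−Q₁·(H² + D²) + π·λ_u·H²)) = ε. -/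
open Real

/-! With `S = H² + D²`, the choice of `β_e` makes `Q₁ = w / S`, so `Q₁ S = w` and the inner
exponent becomes `π λ_e S e^{π λ_u H²} / (w e^w)`, which is `ln (1 / (1 - ε))` by the equation
defining `w`. -/

theorem mul_sqrt_four_mul_sq_div_sq_mul_sq_div_two {a w S : ℝ} (ha : 0 < a) (hw : 0 ≤ w)
    (hS : 0 ≤ S) : a * √(4 * w ^ 2 / (a ^ 2 * S ^ 2)) / 2 = w / S := by
  have hsq : 4 * w ^ 2 / (a ^ 2 * S ^ 2) = (2 * w / (a * S)) ^ 2 := by ring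
  rw [hsq, sqrt_sq (by positivity)]
  field_simp

theorem div_mul_exp_neg_add_eq_of_mul_exp_eq {c a w L : ℝ} (hw : w ≠ 0) (hL : L ≠ 0)
    (h : w * exp w = c * exp a / L) : c / w * exp (-w + a) = L := by
  rw [exp_add, exp_neg]
  field_simp at h ⊢
  linarith

theorem log_one_div_one_sub_pos {ε : ℝ} (h0 : 0 < ε) (h1 : ε < 1) : 0 < log (1 / (1 - ε)) := by
  rw [one_div, log_inv, neg_pos]
  exact log_neg (by linarith) (by linarith)

theorem exp_neg_log_one_div_one_sub {ε : ℝ} (h : ε < 1) : exp (-log (1 / (1 - ε))) = 1 - ε := by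
  rw [one_div, log_inv, neg_neg, exp_log (by linarith)]

theorem guard_zone_outage_closed_form_solution_general
    (lu le H D ε w βe Q1 : ℝ)
    (hlu : 0 < lu) (hH : 0 < H)
    (hε : ε ∈ Set.Ioo (0 : ℝ) 1) (hw : 0 < w)
    (hweq : w * Real.exp w
      = π * le * (H ^ 2 + D ^ 2) * Real.exp (π * lu * H ^ 2) / Real.log (1 / (1 - ε)))
    (hβe : βe = 4 * w ^ 2 / (π ^ 4 * lu ^ 2 * (H ^ 2 + D ^ 2) ^ 2))
    (hQ1 : Q1 = π ^ 2 * lu * Real.sqrt βe / 2) :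
    1 - Real.exp (-(π * le / Q1)
        * Real.exp (-(Q1 * (H ^ 2 + D ^ 2)) + π * lu * H ^ 2)) = ε := by
  obtain ⟨hε0, hε1⟩ := hε
  have hS : 0 < H ^ 2 + D ^ 2 := by positivity
  have hQ : Q1 = w / (H ^ 2 + D ^ 2) := by
    rw [hQ1, hβe, show π ^ 4 * lu ^ 2 = (π ^ 2 * lu) ^ 2 by ring]
    exact mul_sqrt_four_mul_sq_div_sq_mul_sq_div_two (by positivity) hw.le hS.le
  have hQS : Q1 * (H ^ 2 + D ^ 2) = w := by rw [hQ]; field_simp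
  have hcoef : π * le / Q1 = π * le * (H ^ 2 + D ^ 2) / w := by rw [hQ]; field_simp
  have hexponent := div_mul_exp_neg_add_eq_of_mul_exp_eq hw.ne'
    (log_one_div_one_sub_pos hε0 hε1).ne' hweq
  rw [hQS, hcoef, neg_mul, hexponent, exp_neg_log_one_div_one_sub hε1]
  ring

/-- Verification of the closed-form solution `R_e*` (equation (26)) of the guard-zone secrecy
outage equation `P̃_so^zone = ε` in the case `D ≥ K` (first branch of equation (25)). -/
theorem guard_zone_outage_closed_form_solution
    (lu le H D ε w βe Q1 : ℝ)
    (hlu : 0 < lu) (hle : 0 < le) (hH : 0 < H) (hD : 0 ≤ D)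
    (hε : ε ∈ Set.Ioo (0 : ℝ) 1) (hw : 0 < w)
    (hweq : w * Real.exp w
      = π * le * (H ^ 2 + D ^ 2) * Real.exp (π * lu * H ^ 2) / Real.log (1 / (1 - ε)))
    (hβe : βe = 4 * w ^ 2 / (π ^ 4 * lu ^ 2 * (H ^ 2 + D ^ 2) ^ 2))
    (hQ1 : Q1 = π ^ 2 * lu * Real.sqrt βe / 2) :
    1 - Real.exp (-(π * le / Q1)
        * Real.exp (-(Q1 * (H ^ 2 + D ^ 2)) + π * lu * H ^ 2)) = ε :=
  guard_zone_outage_closed_form_solution_general lu le H D ε w βe Q1 hlu hH hε hw hweq hβe hQ1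
end

section
/- Let λ_e > 0, λ_u > 0, H > 0, K > 0, η_L > 0, η_N > 0 and Q > 0. Then: (i) the function D ↦ 1 − exp(−(π·λ_e/Q)·exp(−Q·(H² + D²) + π·λ_u·H²)) is strictly decreasing on [0, ∞); (ii) the function D ↦ 1 − exp(−2π·λ_e·exp(π·λ_u·H²)·[ ((η_L/η_N)^{1/2}/(2Q))·exp(−(η_N/η_L)^{1/2}·Q·(H² + K²)) + (1 + Q·√(H² + D²))·exp(−Q·√(H² + D²))/Q² − (1 + Q·√(H² + K²))·exp(−Q·√(H² + K²))/Q² ]) is strictly decreasing on [0, K]. -/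
open Real Set

lemma aux_strictAnti : StrictAntiOn (fun t : ℝ => (1 + t) * Real.exp (-t)) (Ici 0) := by
  apply strictAntiOn_of_deriv_neg (convex_Ici 0)
  · exact Continuous.continuousOn (by continuity)
  · intro t ht
    simp only [interior_Ici, mem_Ioi] at ht
    have hd : HasDerivAt (fun t : ℝ => (1 + t) * Real.exp (-t))
        ((0 + 1) * Real.exp (-t) + (1 + t) * (Real.exp (-t) * (-1))) t := by
      exact ((hasDerivAt_const t 1).add (hasDerivAt_id t)).mul
        ((Real.hasDerivAt_exp (-t)).comp t ((hasDerivAt_id t).neg))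
    rw [hd.deriv]
    have := Real.exp_pos (-t)
    nlinarith

/-- The two branches of the closed-form approximate guard-zone secrecy outage probability
`P̃_so^zone` (equation (25), Corollary 3 of the paper) are strictly decreasing in the guard
zone radius `D`, on `[0, ∞)` and on `[0, K]` respectively. -/
theorem guard_zone_outage_strictAnti_in_D
    (le lu H K eL eN Q : ℝ)
    (hle : 0 < le) (hlu : 0 < lu) (hH : 0 < H) (hK : 0 < K)
    (heL : 0 < eL) (heN : 0 < eN) (hQ : 0 < Q) :
    StrictAntiOn
      (fun D : ℝ =>
        1 - Real.exp (-(π * le / Q) * Real.exp (-(Q * (H ^ 2 + D ^ 2)) + π * lu * H ^ 2)))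
      (Ici 0) ∧
    StrictAntiOn
      (fun D : ℝ =>
        1 - Real.exp (-(2 * π * le * Real.exp (π * lu * H ^ 2) *
          (Real.sqrt (eL / eN) / (2 * Q)
              * Real.exp (-(Real.sqrt (eN / eL) * Q * (H ^ 2 + K ^ 2)))
            + (1 + Q * Real.sqrt (H ^ 2 + D ^ 2))
                * Real.exp (-(Q * Real.sqrt (H ^ 2 + D ^ 2))) / Q ^ 2
            - (1 + Q * Real.sqrt (H ^ 2 + K ^ 2))
                * Real.exp (-(Q * Real.sqrt (H ^ 2 + K ^ 2))) / Q ^ 2))))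
      (Icc 0 K) := by
  have hpi := Real.pi_pos
  constructor
  · intro a ha b hb hab
    simp only [mem_Ici] at ha hb
    have hsq : a ^ 2 < b ^ 2 := by nlinarith
    have hE : Real.exp (-(Q * (H ^ 2 + b ^ 2)) + π * lu * H ^ 2)
        < Real.exp (-(Q * (H ^ 2 + a ^ 2)) + π * lu * H ^ 2) := by
      apply Real.exp_lt_exp.mpr; nlinarith
    have hc1 : 0 < π * le / Q := by positivity
    have : -(π * le / Q) * Real.exp (-(Q * (H ^ 2 + a ^ 2)) + π * lu * H ^ 2)
        < -(π * le / Q) * Real.exp (-(Q * (H ^ 2 + b ^ 2)) + π * lu * H ^ 2) := by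
      nlinarith
    simp only []
    have := Real.exp_lt_exp.mpr this
    linarith
  · intro a ha b hb hab
    simp only [mem_Icc] at ha hb
    have hsq : H ^ 2 + a ^ 2 < H ^ 2 + b ^ 2 := by nlinarith [ha.1]
    have hsa : 0 < Real.sqrt (H ^ 2 + a ^ 2) := Real.sqrt_pos.mpr (by positivity)
    have hs : Real.sqrt (H ^ 2 + a ^ 2) < Real.sqrt (H ^ 2 + b ^ 2) :=
      Real.sqrt_lt_sqrt (by positivity) hsq
    have hQs : Q * Real.sqrt (H ^ 2 + a ^ 2) < Q * Real.sqrt (H ^ 2 + b ^ 2) := by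
      exact mul_lt_mul_of_pos_left hs hQ
    have hmain : (1 + Q * Real.sqrt (H ^ 2 + b ^ 2))
          * Real.exp (-(Q * Real.sqrt (H ^ 2 + b ^ 2)))
        < (1 + Q * Real.sqrt (H ^ 2 + a ^ 2))
          * Real.exp (-(Q * Real.sqrt (H ^ 2 + a ^ 2))) :=
      aux_strictAnti (mem_Ici.mpr (by positivity)) (mem_Ici.mpr (by positivity)) hQs
    have hQ2 : (0:ℝ) < Q ^ 2 := by positivity
    have hbr : (1 + Q * Real.sqrt (H ^ 2 + b ^ 2))
          * Real.exp (-(Q * Real.sqrt (H ^ 2 + b ^ 2))) / Q ^ 2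
        < (1 + Q * Real.sqrt (H ^ 2 + a ^ 2))
          * Real.exp (-(Q * Real.sqrt (H ^ 2 + a ^ 2))) / Q ^ 2 :=
      (div_lt_div_iff_of_pos_right hQ2).mpr hmain
    have hC : 0 < 2 * π * le * Real.exp (π * lu * H ^ 2) := by positivity
    simp only []
    set S := Real.sqrt (eL / eN) / (2 * Q)
      * Real.exp (-(Real.sqrt (eN / eL) * Q * (H ^ 2 + K ^ 2))) with hS
    set T := (1 + Q * Real.sqrt (H ^ 2 + K ^ 2))
      * Real.exp (-(Q * Real.sqrt (H ^ 2 + K ^ 2))) / Q ^ 2 with hT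
    set xa := (1 + Q * Real.sqrt (H ^ 2 + a ^ 2))
      * Real.exp (-(Q * Real.sqrt (H ^ 2 + a ^ 2))) / Q ^ 2 with hxa
    set xb := (1 + Q * Real.sqrt (H ^ 2 + b ^ 2))
      * Real.exp (-(Q * Real.sqrt (H ^ 2 + b ^ 2))) / Q ^ 2 with hxb
    have harg : -(2 * π * le * Real.exp (π * lu * H ^ 2) * (S + xa - T))
        < -(2 * π * le * Real.exp (π * lu * H ^ 2) * (S + xb - T)) := by
      nlinarith [mul_pos hC (sub_pos.mpr hbr)]
    have := Real.exp_lt_exp.mpr harg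
    linarith
end

section
/- Let λ_u > 0, H > 0, β > 0, η_L > 0, η_N > 0 and assume η_N ≤ η_L·H². Then the function K ↦ exp(−(π·λ_u·H·β^{1/2}·η_N^{1/2}/(2·η_L^{1/2}))·(π − 2·arctan(η_L^{1/2}·(H² + K²)/(η_N^{1/2}·H·β^{1/2}))) − π·λ_u·H²·β·ln((H²·β + H² + K²)/(H²·β + H²))) is strictly decreasing on [0, ∞). -/
open Real Set

/-!
Substituting `t = K²`, the exponent is `t ↦ 2 A arctan (c (H² + t)) - B log (H² β + H² + t)` plus a
constant, where `2 A c = π λ_u` and `B = π λ_u H² β`. Its derivative is therefore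
`π λ_u (η_N H² β / (η_N H² β + η_L s²) - H² β / (H² β + s))` with `s = H² + t`, which is negative
exactly when `η_N < η_L s`; this holds for `t > 0` because `η_N ≤ η_L H²`.
-/

namespace ConnectionProbability

/-- The exponent of `P̃_c` as a function of `t = K²`. -/
noncomputable def exponent (lu H β eL eN t : ℝ) : ℝ :=
  -(π * lu * H * √β * √eN / (2 * √eL))
      * (π - 2 * arctan (√eL * (H ^ 2 + t) / (√eN * H * √β)))
    - π * lu * H ^ 2 * β * log ((H ^ 2 * β + H ^ 2 + t) / (H ^ 2 * β + H ^ 2))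

lemma mul_div_add_sq_lt_div {e f q s : ℝ} (he : 0 < e) (hq : 0 < q) (hs : 0 < s)
    (h : e < f * s) : e * q / (e * q + f * s ^ 2) < q / (q + s) := by
  have hfs : 0 < f * s := he.trans h
  rw [div_lt_div_iff₀ (by nlinarith) (by positivity)]
  nlinarith [mul_lt_mul_of_pos_left h (mul_pos hq hs)]

variable {lu H β eL eN : ℝ}

lemma hasDerivAt_exponent (hH : 0 < H) (hβ : 0 < β) (heL : 0 < eL) (heN : 0 < eN)
    {t : ℝ} (ht : 0 ≤ t) :
    HasDerivAt (exponent lu H β eL eN)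
      (π * lu * (eN * (H ^ 2 * β) / (eN * (H ^ 2 * β) + eL * (H ^ 2 + t) ^ 2)
        - H ^ 2 * β / (H ^ 2 * β + (H ^ 2 + t)))) t := by
  have hu : HasDerivAt (fun t : ℝ => √eL * (H ^ 2 + t) / (√eN * H * √β))
      (√eL / (√eN * H * √β)) t := by
    simpa using (((hasDerivAt_id t).const_add (H ^ 2)).const_mul √eL).div_const (√eN * H * √β)
  have hv : HasDerivAt (fun t : ℝ => (H ^ 2 * β + H ^ 2 + t) / (H ^ 2 * β + H ^ 2))
      (1 / (H ^ 2 * β + H ^ 2)) t :=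
    ((hasDerivAt_id t).const_add (H ^ 2 * β + H ^ 2)).div_const _
  have hv_ne : (H ^ 2 * β + H ^ 2 + t) / (H ^ 2 * β + H ^ 2) ≠ 0 := by positivity
  refine ((((hasDerivAt_arctan _).comp t hu).const_mul 2).const_sub π |>.const_mul
    (-(π * lu * H * √β * √eN / (2 * √eL)))).sub ((hv.log hv_ne).const_mul (π * lu * H ^ 2 * β))
    |>.congr_deriv ?_
  have hu_sq : (√eL * (H ^ 2 + t) / (√eN * H * √β)) ^ 2
      = eL * (H ^ 2 + t) ^ 2 / (eN * H ^ 2 * β) := by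
    rw [div_pow, mul_pow, mul_pow, mul_pow, sq_sqrt heL.le, sq_sqrt heN.le, sq_sqrt hβ.le]
  have : 0 < √eL := sqrt_pos.mpr heL
  have : 0 < √eN := sqrt_pos.mpr heN
  have : 0 < √β := sqrt_pos.mpr hβ
  rw [hu_sq]
  field_simp
  ring

lemma strictAntiOn_exponent (hlu : 0 < lu) (hH : 0 < H) (hβ : 0 < β) (heL : 0 < eL)
    (heN : 0 < eN) (hdom : eN ≤ eL * H ^ 2) :
    StrictAntiOn (exponent lu H β eL eN) (Ici 0) := by
  refine strictAntiOn_of_hasDerivWithinAt_neg (convex_Ici 0)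
    (fun t ht => (hasDerivAt_exponent hH hβ heL heN ht).continuousAt.continuousWithinAt)
    (fun t ht => (hasDerivAt_exponent hH hβ heL heN (interior_subset ht).out).hasDerivWithinAt)
    fun t ht => ?_
  rw [interior_Ici, mem_Ioi] at ht
  have hdom' : eN < eL * (H ^ 2 + t) := by nlinarith
  exact mul_neg_of_pos_of_neg (by positivity) <| sub_neg.mpr <|
    mul_div_add_sq_lt_div heN (by positivity) (by positivity) hdom'

end ConnectionProbability

/-- The closed-form approximate connection probability `P̃_c` of Corollary 1 (equation (16))
of the paper is strictly decreasing in the LoS-region radius `K`, under the hypothesis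
`η_N ≤ η_L H²`. -/
theorem connection_probability_strictAnti_in_K
    (lu H β eL eN : ℝ)
    (hlu : 0 < lu) (hH : 0 < H) (hβ : 0 < β) (heL : 0 < eL) (heN : 0 < eN)
    (hdom : eN ≤ eL * H ^ 2) :
    StrictAntiOn
      (fun K : ℝ =>
        Real.exp (-(π * lu * H * Real.sqrt β * Real.sqrt eN / (2 * Real.sqrt eL))
            * (π - 2 * Real.arctan (Real.sqrt eL * (H ^ 2 + K ^ 2)
                / (Real.sqrt eN * H * Real.sqrt β)))
          - π * lu * H ^ 2 * β
            * Real.log ((H ^ 2 * β + H ^ 2 + K ^ 2) / (H ^ 2 * β + H ^ 2))))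
      (Ici 0) :=
  exp_strictMono.comp_strictAntiOn <|
    (ConnectionProbability.strictAntiOn_exponent hlu hH hβ heL heN hdom).comp_strictMonoOn
      (pow_left_strictMonoOn₀ two_ne_zero) fun K _ => sq_nonneg K
end
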